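/- arXiv:q-alg/9712025 — 5 statements merged into one kernel-verified Lean document; each statement's English description precedes it below -/
import Mathlib

section
/- In a Frobenius algebra A over a field of characteristic 0, the principal ideal ωA generated by the characteristic element ω equals the socle of A (the minimal essential ideal, equivalently the sum of all minimal ideals). -/
/-!
The trace form of `A` is `x ↦ f (x * ω)`, so `ω * x = 0` exactly when every multiple of `x` has
trace zero. Nilpotent elements qualify, while a non-nilpotent `x` divides a nonzero idempotent,
whose trace is its rank, nonzero in characteristic 0. Hence the annihilator of `ω` is the
nilradical `N`, and rank–nullity for multiplication by `ω`, together with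
`dim Ann I = dim A - dim I` (nondegeneracy of `(x, y) ↦ f (x * y)`), gives `ωA = Ann N`.
Finally `Ann N` is the socle: the radical kills every simple module, and `Ann N` is a module over
the semisimple ring `A ⧸ N`.
-/

open Module

theorem Submodule.le_sSup_isAtom_of_isSemisimpleModule {R M : Type*} [Ring R] [AddCommGroup M]
    [Module R M] (p : Submodule R M) [IsSemisimpleModule R p] :
    p ≤ sSup {m : Submodule R M | IsAtom m} := by
  have hp : p = ⨆ m ∈ {m : Submodule R p | IsSimpleModule R m}, m.map p.subtype := by
    rw [← (gc_map_comap _).l_sSup, IsSemisimpleModule.sSup_simples_eq_top, map_top,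
      range_subtype]
  rw [hp]
  refine iSup₂_le fun m hm ↦ le_sSup ?_
  have : IsSimpleModule R m := hm
  exact isSimpleModule_iff_isAtom.mp
    (.congr (m.equivMapOfInjective _ p.injective_subtype).symm)

theorem sSup_isAtom_eq_annihilator_jacobson (R : Type*) [CommRing R] [IsSemiprimaryRing R] :
    sSup {I : Ideal R | IsAtom I} = (Ring.jacobson R).annihilator := by
  apply le_antisymm
  · refine sSup_le fun I hI ↦ fun x hx ↦ Submodule.mem_annihilator.mpr fun a ha ↦ ?_
    have : IsSimpleModule R I := isSimpleModule_iff_isAtom.mpr hI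
    have hJ := IsSemisimpleModule.jacobson_le_annihilator R I ha
    rw [smul_eq_mul, mul_comm]
    exact congrArg Subtype.val (Module.mem_annihilator.mp hJ ⟨x, hx⟩)
  · have hJ : IsTorsionBySet R (Ring.jacobson R).annihilator (Ring.jacobson R) :=
      fun x a ↦ Subtype.ext <| by
        simpa [mul_comm] using Submodule.mem_annihilator.mp x.2 a a.2
    let _ := hJ.module
    have := hJ.isSemisimpleModule_iff.mp inferInstance
    exact Submodule.le_sSup_isAtom_of_isSemisimpleModule _

theorem IsArtinianRing.exists_isIdempotentElem_dvd {R : Type*} [CommRing R] [IsArtinianRing R]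
    {x : R} (hx : ¬IsNilpotent x) : ∃ u, IsIdempotentElem u ∧ u ≠ 0 ∧ x ∣ u := by
  obtain ⟨n, y, hy⟩ := IsArtinian.exists_pow_succ_smul_dvd x (1 : R)
  simp only [smul_eq_mul, mul_one, pow_succ] at hy
  have hfix : ∀ k, x ^ n * (x * y) ^ k = x ^ n := by
    intro k
    induction k with
    | zero => simp
    | succ k ih => rw [pow_succ, ← mul_assoc, ih, ← mul_assoc, hy]
  refine ⟨(x * y) ^ (n + 1), ?_, ?_, ?_⟩
  · calc (x * y) ^ (n + 1) * (x * y) ^ (n + 1)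
        _ = x ^ n * (x * y) ^ (n + 1) * (x * y ^ (n + 1)) := by ring
        _ = (x * y) ^ (n + 1) := by rw [hfix]; ring
  · intro h0
    exact hx ⟨n, by rw [← hfix (n + 1), h0, mul_zero]⟩
  · exact ⟨y * (x * y) ^ n, by ring⟩

namespace Frobenius

variable {K A ι : Type*} [Field K] [CommRing A] [Algebra K A] {f : A →ₗ[K] K}
  [DecidableEq ι] {e : Basis ι K A} {d : ι → A}

theorem apply_mul_eq_repr (hd : ∀ i j, f (e i * d j) = if i = j then 1 else 0)
    (x : A) (j : ι) : f (x * d j) = e.repr x j := by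
  have hdual : f ∘ₗ LinearMap.mulRight K (d j) = e.coord j :=
    e.ext fun i ↦ by simp [hd, Finsupp.single_apply]
  exact LinearMap.congr_fun hdual x

theorem eq_zero_of_forall_apply_mul_eq_zero (hd : ∀ i j, f (e i * d j) = if i = j then 1 else 0)
    {x : A} (hx : ∀ y, f (x * y) = 0) : x = 0 :=
  e.repr.injective <| Finsupp.ext fun j ↦ by simp [← apply_mul_eq_repr hd, hx]

theorem trace_eq_apply_mul [Fintype ι] (hd : ∀ i j, f (e i * d j) = if i = j then 1 else 0)
    (x : A) :
    Algebra.trace K A x = f (x * ∑ i, e i * d i) := by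
  simp only [Algebra.trace_eq_matrix_trace e, Matrix.trace, Matrix.diag,
    Algebra.leftMulMatrix_eq_repr_mul, ← apply_mul_eq_repr hd, Finset.mul_sum, map_sum, mul_assoc]

theorem finrank_annihilator [FiniteDimensional K A]
    (hd : ∀ i j, f (e i * d j) = if i = j then 1 else 0) (I : Ideal A) :
    finrank K (I.annihilator.restrictScalars K) =
      finrank K A - finrank K (I.restrictScalars K) := by
  set B : LinearMap.BilinForm K A := (LinearMap.mul K A).compr₂ f
  have hB : B.Nondegenerate :=
    (LinearMap.IsRefl.nondegenerate_iff_separatingLeft fun x y h ↦ by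
      simpa [B, mul_comm] using h).mpr fun x hx ↦ eq_zero_of_forall_apply_mul_eq_zero hd hx
  have hann : I.annihilator.restrictScalars K = B.orthogonal (I.restrictScalars K) := by
    ext x
    simp only [Submodule.restrictScalars_mem, Submodule.mem_annihilator,
      LinearMap.BilinForm.mem_orthogonal_iff, B, LinearMap.compr₂_apply, LinearMap.mul_apply',
      smul_eq_mul]
    refine ⟨fun h n hn ↦ by rw [mul_comm, h n hn, map_zero], fun h n hn ↦ ?_⟩
    refine eq_zero_of_forall_apply_mul_eq_zero hd fun y ↦ ?_
    simpa only [mul_comm x, mul_right_comm n] using h (n * y) (I.mul_mem_right y hn)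
  rw [hann, LinearMap.BilinForm.finrank_orthogonal hB]

theorem mul_eq_zero_iff_isNilpotent [Fintype ι] [CharZero K] [FiniteDimensional K A]
    (hd : ∀ i j, f (e i * d j) = if i = j then 1 else 0) {x : A} :
    (∑ i, e i * d i) * x = 0 ↔ IsNilpotent x := by
  have : IsArtinianRing A := isArtinian_of_tower K inferInstance
  constructor
  · intro hx
    by_contra hnil
    obtain ⟨u, hu, hu0, c, rfl⟩ := IsArtinianRing.exists_isIdempotentElem_dvd hnil
    apply hu0
    have hlmul : Algebra.lmul K A (x * c) = 0 := by
      refine LinearMap.IsIdempotentElem.eq_zero_of_trace_eq_zero (hu.map _) ?_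
      rw [← Algebra.trace_apply, trace_eq_apply_mul hd, mul_right_comm, mul_comm x, hx, zero_mul,
        map_zero]
    simpa using congrArg (· 1) hlmul
  · intro hx
    refine eq_zero_of_forall_apply_mul_eq_zero hd fun y ↦ ?_
    have : IsNilpotent (Algebra.trace K A (x * y)) :=
      Algebra.isNilpotent_trace_of_isNilpotent ((Commute.all x y).isNilpotent_mul_right hx)
    rw [trace_eq_apply_mul hd] at this
    convert this.eq_zero using 2
    ring

theorem span_eq_annihilator_nilradical [Fintype ι] [CharZero K] [FiniteDimensional K A]
    (hd : ∀ i j, f (e i * d j) = if i = j then 1 else 0) :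
    Ideal.span {∑ i, e i * d i} = (nilradical A).annihilator := by
  set ω := ∑ i, e i * d i
  have hle : Ideal.span {ω} ≤ (nilradical A).annihilator :=
    (Ideal.span_singleton_le_iff_mem _).mpr <| Submodule.mem_annihilator.mpr fun x hx ↦
      (mul_eq_zero_iff_isNilpotent hd).mpr (mem_nilradical.mp hx)
  have hker : LinearMap.ker (LinearMap.mulLeft K ω) = (nilradical A).restrictScalars K := by
    ext x
    exact (mul_eq_zero_iff_isNilpotent hd).trans mem_nilradical.symm
  have hrange : LinearMap.range (LinearMap.mulLeft K ω) = (Ideal.span {ω}).restrictScalars K := by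
    ext x
    simp [Ideal.mem_span_singleton', mul_comm]
  have hrank := LinearMap.finrank_range_add_finrank_ker (LinearMap.mulLeft K ω)
  rw [hker, hrange] at hrank
  refine Submodule.restrictScalars_injective K A A (Submodule.eq_of_le_of_finrank_eq hle ?_)
  rw [finrank_annihilator hd]
  omega

end Frobenius

/-- In a Frobenius algebra over a field of characteristic 0, the principal
ideal generated by the characteristic element `ω = Σ_i e_i * e_i^#` equals the socle of
`A`, i.e. the sum of all minimal (atomic) ideals of `A`. -/
theorem stmt5 (K A : Type*) [Field K] [CharZero K] [CommRing A] [Algebra K A]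
    [FiniteDimensional K A] (f : A →ₗ[K] K)
    {ι : Type*} [Fintype ι] [DecidableEq ι]
    (e : Module.Basis ι K A) (d : ι → A)
    (hd : ∀ i j, f (e i * d j) = if i = j then 1 else 0) :
    Ideal.span {∑ i, e i * d i} = sSup {I : Ideal A | IsAtom I} := by
  have : IsArtinianRing A := isArtinian_of_tower K inferInstance
  rw [Frobenius.span_eq_annihilator_nilradical hd, sSup_isAtom_eq_annihilator_jacobson,
    Ring.jacobson_eq_nilradical_of_krullDimLE_zero]
end

section
/- Let A be a Frobenius algebra over a field K of characteristic 0, with Frobenius form f and characteristic element ω. If a ∈ A is nilpotent and e_i, e_i^# are as in a basis/dual-basis pair adapted to a socle filtration, then for each i, e_i e_i^# annihilates the nilradical; consequently ω · N(A) = 0, i.e., ω lies in the annihilator of the nilradical of A. -/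
/-!
Since `(e, d)` is a dual pair for `f`, the coordinates of `x` are `f (x * d j)`, and the
trace of left multiplication by `b` is `Σ_i f (b * e_i * d_i) = f (b * ω)`. For nilpotent `a`
every product `a * d_j` is nilpotent, so its trace `f (ω * a * d_j)` vanishes; hence all
coordinates of `ω * a` vanish.
-/

namespace Module.Basis

variable {K A ι : Type*} [CommRing K] [DecidableEq ι]

theorem repr_apply_eq_of_dual [Ring A] [Algebra K A] {f : A →ₗ[K] K} {e : Basis ι K A}
    {d : ι → A} (hd : ∀ i j, f (e i * d j) = if i = j then 1 else 0)
    (x : A) (j : ι) : e.repr x j = f (x * d j) := by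
  conv_rhs => rw [← e.linearCombination_repr x, Finsupp.linearCombination_apply]
  simp [Finsupp.sum, Finset.sum_mul, hd]

theorem trace_eq_of_dual [CommRing A] [Algebra K A] [Fintype ι] {f : A →ₗ[K] K}
    {e : Basis ι K A} {d : ι → A} (hd : ∀ i j, f (e i * d j) = if i = j then 1 else 0)
    (b : A) : Algebra.trace K A b = f (b * ∑ i, e i * d i) := by
  simp only [Algebra.trace_eq_matrix_trace e, Matrix.trace, Matrix.diag_apply,
    Algebra.leftMulMatrix_eq_repr_mul, e.repr_apply_eq_of_dual hd, Finset.mul_sum, map_sum,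
    mul_assoc]

end Module.Basis

theorem stmt6_general (K A : Type*) [Field K] [CommRing A] [Algebra K A]
    (f : A →ₗ[K] K)
    {ι : Type*} [Fintype ι] [DecidableEq ι]
    (e : Module.Basis ι K A) (d : ι → A)
    (hd : ∀ i j, f (e i * d j) = if i = j then 1 else 0) :
    ∀ a : A, IsNilpotent a → (∑ i, e i * d i) * a = 0 := by
  intro a ha
  refine e.repr.injective (Finsupp.ext fun j => ?_)
  have hnil : IsNilpotent (a * d j) := (Commute.all a (d j)).isNilpotent_mul_right ha
  have htrace : Algebra.trace K A (a * d j) = 0 :=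
    (Algebra.isNilpotent_trace_of_isNilpotent hnil).eq_zero
  rw [e.trace_eq_of_dual hd, mul_comm] at htrace
  rw [map_zero, Finsupp.zero_apply, e.repr_apply_eq_of_dual hd, mul_assoc, htrace]

/-- In a Frobenius algebra over a field of characteristic 0, the
characteristic element `ω = Σ_i e_i * e_i^#` annihilates the nilradical: for every
nilpotent `a ∈ A` we have `ω * a = 0`, i.e. `ω` lies in the annihilator of `N(A)`. -/
theorem stmt6 (K A : Type*) [Field K] [CharZero K] [CommRing A] [Algebra K A]
    [FiniteDimensional K A] (f : A →ₗ[K] K)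
    {ι : Type*} [Fintype ι] [DecidableEq ι]
    (e : Module.Basis ι K A) (d : ι → A)
    (hd : ∀ i j, f (e i * d j) = if i = j then 1 else 0) :
    ∀ a : A, IsNilpotent a → (∑ i, e i * d i) * a = 0 :=
  stmt6_general K A f e d hd
end

section
/- The characteristic element ω of a Frobenius algebra A over a field of characteristic 0 is a unit if and only if A is semisimple. -/
/-!
For a dual pair of bases, the trace of multiplication by `a` is `f (a * ω)`. If `x` is
nilpotent, every `x * b` has nilpotent multiplication map and so trace zero; hence
`f (x * ω * b) = 0` for all `b`, and `x * ω = 0` by nondegeneracy. So when `ω` is a unit, `A` is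
reduced, hence semisimple. Conversely, in a semisimple ring every principal ideal is generated
by an idempotent, so `ω` is a unit as soon as no nonzero idempotent `a` satisfies `a * ω = 0`;
for such an `a`, multiplication by `a` is a projection of trace `f (a * ω) = 0`, and in
characteristic zero the trace of a projection is its rank, so `a = 0`.
-/

theorem IsSemisimpleRing.isUnit_of_forall_isIdempotentElem {R : Type*} [CommRing R]
    [IsSemisimpleRing R] {r : R} (h : ∀ a, IsIdempotentElem a → a * r = 0 → a = 0) :
    IsUnit r := by
  refine IsArtinianRing.isUnit_iff_mem_nonZeroDivisors.mpr
    (mem_nonZeroDivisors_iff_right.mpr fun x hx => ?_)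
  obtain ⟨a, ha, hspan⟩ := IsSemisimpleRing.ideal_eq_span_idempotent (Ideal.span {x})
  have ha_mem : a ∈ Ideal.span {x} := hspan ▸ Ideal.mem_span_singleton_self a
  obtain ⟨c, rfl⟩ := Ideal.mem_span_singleton'.mp ha_mem
  have hcx : c * x = 0 := h _ ha (by rw [mul_assoc, hx, mul_zero])
  have hx_mem : x ∈ Ideal.span {c * x} := hspan ▸ Ideal.mem_span_singleton_self x
  simpa [hcx] using hx_mem

section DualBases

variable {K A ι : Type*} [Field K] [CommRing A] [Algebra K A] [Fintype ι] [DecidableEq ι]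
  (f : A →ₗ[K] K) (e : Module.Basis ι K A) (d : ι → A)

noncomputable def characteristicElement : A := ∑ i, e i * d i

variable {f e d} (hd : ∀ i j, f (e i * d j) = if i = j then 1 else 0)
include hd

theorem apply_mul_dual_eq_repr (x : A) (j : ι) : f (x * d j) = e.repr x j := by
  conv_lhs => rw [← e.sum_repr x]
  rw [Finset.sum_mul, map_sum]
  simp [hd]

theorem eq_zero_of_forall_apply_mul_eq_zero {y : A} (hy : ∀ b, f (y * b) = 0) : y = 0 :=
  e.forall_coord_eq_zero_iff.mp fun j => by
    rw [Module.Basis.coord_apply, ← apply_mul_dual_eq_repr hd, hy]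

theorem trace_mulLeft_eq_apply_mul_characteristicElement (a : A) :
    LinearMap.trace K A (LinearMap.mulLeft K a) = f (a * characteristicElement e d) := by
  simp only [LinearMap.trace_eq_matrix_trace K e, Matrix.trace, Matrix.diag,
    LinearMap.toMatrix_apply, LinearMap.mulLeft_apply, ← apply_mul_dual_eq_repr hd, mul_assoc,
    characteristicElement, Finset.mul_sum, map_sum]

theorem mul_characteristicElement_eq_zero_of_isNilpotent {x : A} (hx : IsNilpotent x) :
    x * characteristicElement e d = 0 := by
  refine eq_zero_of_forall_apply_mul_eq_zero hd fun b => ?_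
  have hxb : IsNilpotent (LinearMap.mulLeft K (x * b)) :=
    ((Commute.all x b).isNilpotent_mul_right hx).map (Algebra.lmul K A)
  rw [mul_right_comm, ← trace_mulLeft_eq_apply_mul_characteristicElement hd]
  exact (LinearMap.isNilpotent_trace_of_isNilpotent hxb).eq_zero

theorem eq_zero_of_isIdempotentElem_of_mul_characteristicElement_eq_zero [CharZero K]
    [FiniteDimensional K A] {a : A} (ha : IsIdempotentElem a)
    (h : a * characteristicElement e d = 0) : a = 0 := by
  have hproj : IsIdempotentElem (LinearMap.mulLeft K a) := ha.map (Algebra.lmul K A)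
  rw [← LinearMap.mulLeft_eq_zero_iff K]
  exact LinearMap.IsIdempotentElem.eq_zero_of_trace_eq_zero hproj
    (by rw [trace_mulLeft_eq_apply_mul_characteristicElement hd, h, map_zero])

end DualBases

/-- The characteristic element `ω = Σ_i e_i * e_i^#` of a Frobenius
algebra `A` over a field of characteristic 0 is a unit if and only if `A` is
semisimple. -/
theorem stmt7 (K A : Type*) [Field K] [CharZero K] [CommRing A] [Algebra K A]
    [FiniteDimensional K A] (f : A →ₗ[K] K)
    {ι : Type*} [Fintype ι] [DecidableEq ι]
    (e : Module.Basis ι K A) (d : ι → A)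
    (hd : ∀ i j, f (e i * d j) = if i = j then 1 else 0) :
    IsUnit (∑ i, e i * d i) ↔ IsSemisimpleRing A := by
  change IsUnit (characteristicElement e d) ↔ _
  have : IsArtinianRing A := IsArtinianRing.of_finite K A
  constructor
  · intro hω
    have : IsReduced A :=
      ⟨fun x hx => hω.mul_left_eq_zero.mp (mul_characteristicElement_eq_zero_of_isNilpotent hd hx)⟩
    exact IsArtinianRing.isSemisimpleRing_of_isReduced A
  · intro _
    exact IsSemisimpleRing.isUnit_of_forall_isIdempotentElem fun a ha =>
      eq_zero_of_isIdempotentElem_of_mul_characteristicElement_eq_zero hd ha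
end

section
/- Let (A, f) be a Frobenius extension of R, θ : R → K a surjective K-linear ring homomorphism onto a field K of characteristic 0, and B = A ⊗_R K. If the characteristic element ω_{A,f} is a unit in A, then B is semisimple. -/
/-!
For dual bases `bᵢ, dᵢ` of a Frobenius form `f`, the trace form is `Tr(z) = f(z ω)` with
`ω = Σ bᵢ dᵢ`. If `ω` is a unit, the coordinates `f(x dⱼ) = Tr(x dⱼ ω⁻¹)` of a nilpotent `x`
are traces of nilpotents, hence nilpotent, hence zero when the base ring is reduced. Both the
dual bases and the invertibility of `ω` survive base change to `K`, so `K ⊗[R] A` is a reduced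
finite-dimensional algebra over a field, i.e. semisimple.
-/

open TensorProduct

section FrobeniusForm

variable {R A ι : Type*} [CommRing R] [CommRing A] [Algebra R A] [DecidableEq ι]

lemma Module.Basis.repr_eq_apply_mul_dual [Fintype ι] {b : Module.Basis ι R A} {d : ι → A}
    {f : A →ₗ[R] R}
    (hd : ∀ i j, f (b i * d j) = if i = j then 1 else 0) (x : A) (j : ι) :
    b.repr x j = f (x * d j) := by
  conv_rhs => rw [← b.sum_repr x]
  simp only [Finset.sum_mul, smul_mul_assoc, map_sum, map_smul, hd, smul_eq_mul, mul_ite,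
    mul_one, mul_zero, Finset.sum_ite_eq', Finset.mem_univ, if_true]

lemma Algebra.trace_eq_apply_mul_sum_mul_dual [Fintype ι] {b : Module.Basis ι R A} {d : ι → A}
    {f : A →ₗ[R] R} (hd : ∀ i j, f (b i * d j) = if i = j then 1 else 0) (z : A) :
    Algebra.trace R A z = f (z * ∑ i, b i * d i) := by
  simp [Algebra.trace_eq_matrix_trace b, Matrix.trace, Algebra.leftMulMatrix_eq_repr_mul,
    b.repr_eq_apply_mul_dual hd, Finset.mul_sum, mul_assoc]

lemma isReduced_of_isUnit_sum_mul_dual [Fintype ι] [IsReduced R] {b : Module.Basis ι R A}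
    {d : ι → A} {f : A →ₗ[R] R} (hd : ∀ i j, f (b i * d j) = if i = j then 1 else 0)
    (hunit : IsUnit (∑ i, b i * d i)) : IsReduced A := by
  refine ⟨fun x hx => b.repr.injective <| Finsupp.ext fun j => ?_⟩
  obtain ⟨u, hu⟩ := hunit
  have hcoord : b.repr x j = Algebra.trace R A (x * d j * ↑u⁻¹) := by
    rw [b.repr_eq_apply_mul_dual hd, Algebra.trace_eq_apply_mul_sum_mul_dual hd, ← hu,
      mul_assoc _ _ (u : A), Units.inv_mul, mul_one]
  rw [hcoord, map_zero, Finsupp.zero_apply]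
  exact (Algebra.isNilpotent_trace_of_isNilpotent
    ((Commute.all _ _).isNilpotent_mul_right ((Commute.all _ _).isNilpotent_mul_right hx))).eq_zero

lemma Algebra.TensorProduct.liftBaseChange_basis_mul_dual (S : Type*) [CommRing S] [Algebra R S]
    {b : Module.Basis ι R A} {d : ι → A} {f : A →ₗ[R] R}
    (hd : ∀ i j, f (b i * d j) = if i = j then 1 else 0) (i j : ι) :
    ((Algebra.linearMap R S ∘ₗ f).liftBaseChange S)
        (Algebra.TensorProduct.basis S b i * (1 ⊗ₜ d j)) = if i = j then 1 else 0 := by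
  simp [Algebra.TensorProduct.basis_apply, hd, apply_ite (algebraMap R S)]

end FrobeniusForm

theorem stmt13_general (R K A : Type*) [CommRing R] [Field K] [CommRing A]
    [Algebra R K] [Algebra R A]
    {ι : Type*} [Fintype ι] [DecidableEq ι]
    (e : Module.Basis ι R A) (d : ι → A) (f : A →ₗ[R] R)
    (hd : ∀ i j, f (e i * d j) = if i = j then 1 else 0)
    (hunit : IsUnit (∑ i, e i * d i)) :
    IsSemisimpleRing (K ⊗[R] A) := by
  have hunit' : IsUnit (∑ i, Algebra.TensorProduct.basis K e i * (1 ⊗ₜ d i)) := by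
    simpa [Algebra.TensorProduct.basis_apply, ← tmul_sum] using
      hunit.map (Algebra.TensorProduct.includeRight : A →ₐ[R] K ⊗[R] A)
  have : IsReduced (K ⊗[R] A) := isReduced_of_isUnit_sum_mul_dual
    (Algebra.TensorProduct.liftBaseChange_basis_mul_dual K hd) hunit'
  have : Module.Finite K (K ⊗[R] A) := .of_basis (Algebra.TensorProduct.basis K e)
  have : IsArtinianRing (K ⊗[R] A) := isArtinian_of_tower K inferInstance
  exact IsArtinianRing.isSemisimpleRing_of_isReduced _

/-- If the characteristic element `ω = Σ e_i * e_i^#` of a Frobenius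
extension `(A, f)` of `R` is a unit in `A`, then for any surjective homomorphism
`θ : R → K` onto a field of characteristic 0, the base change `B = K ⊗[R] A` is
semisimple. -/
theorem stmt13 (R K A : Type*) [CommRing R] [Field K] [CharZero K] [CommRing A]
    [Algebra R K] [Algebra R A]
    (hsurj : Function.Surjective (algebraMap R K))
    {ι : Type*} [Fintype ι] [DecidableEq ι]
    (e : Module.Basis ι R A) (d : ι → A) (f : A →ₗ[R] R)
    (hd : ∀ i j, f (e i * d j) = if i = j then 1 else 0)
    (hunit : IsUnit (∑ i, e i * d i)) :
    IsSemisimpleRing (K ⊗[R] A) :=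
  stmt13_general R K A e d f hd hunit
end

section
/- Let (A, f) be a Frobenius extension of R with characteristic element ω, θ : R → K a surjective homomorphism onto a field of characteristic 0, and θ̃ : A → B = A ⊗_R K the induced map. If there exists a ∈ A with ω·a = 0 and θ̃(a) ≠ 0, then B is not semisimple. -/
/-!
The trace of multiplication by `y` on `A` is `f (y * ω)`, and traces of multiplication
operators commute with base change to `K`. Since `A → B` is surjective, `Tr_B (b * θ̃ a) = 0`
for every `b ∈ B`. In a semisimple ring the left ideal generated by `θ̃ a` is generated by an
idempotent `ε = b * θ̃ a`; multiplication by `ε` is an idempotent operator of trace `0`, hence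
zero in characteristic `0`, so `ε = 0` and `θ̃ a = 0`.
-/

open TensorProduct

theorem IsSemisimpleRing.eq_zero_of_forall_trace_mulLeft_mul_eq_zero {K B : Type*} [Field K]
    [CharZero K] [Ring B] [Algebra K B] [FiniteDimensional K B] [IsSemisimpleRing B] {c : B}
    (h : ∀ b, LinearMap.trace K B (LinearMap.mulLeft K (b * c)) = 0) : c = 0 := by
  obtain ⟨ε, hε, hspan⟩ := IsSemisimpleRing.ideal_eq_span_idempotent (Ideal.span {c})
  obtain ⟨b, rfl⟩ : ∃ b, b * c = ε :=
    Ideal.mem_span_singleton'.mp (hspan ▸ Ideal.subset_span rfl)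
  obtain ⟨x, hx⟩ : ∃ x, x * (b * c) = c :=
    Ideal.mem_span_singleton'.mp (hspan ▸ Ideal.subset_span rfl)
  have hidem : IsIdempotentElem (LinearMap.mulLeft K (b * c)) := hε.map (Algebra.lmul K B)
  have hε0 : b * c = 0 := by
    have hzero := LinearMap.IsIdempotentElem.eq_zero_of_trace_eq_zero hidem (h b)
    simpa using LinearMap.congr_fun hzero 1
  rw [← hx, hε0, mul_zero]

section Frobenius

variable {R A : Type*} [CommRing R] [Ring A] [Algebra R A] {ι : Type*} [DecidableEq ι]
  {e : Module.Basis ι R A} {d : ι → A} {f : A →ₗ[R] R}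

theorem Module.Basis.repr_apply_eq_of_dual_s14
    (hd : ∀ i j, f (e i * d j) = if i = j then 1 else 0) (z : A) (j : ι) :
    e.repr z j = f (z * d j) := by
  have h : e.coord j = f ∘ₗ LinearMap.mulRight R (d j) :=
    e.ext fun i => by simp [Finsupp.single_apply, hd i j]
  exact LinearMap.congr_fun h z

theorem LinearMap.trace_mulLeft_eq_of_dual [Fintype ι]
    (hd : ∀ i j, f (e i * d j) = if i = j then 1 else 0) (y : A) :
    LinearMap.trace R A (LinearMap.mulLeft R y) = f (y * ∑ i, e i * d i) := by
  rw [LinearMap.trace_eq_matrix_trace R e, Matrix.trace, Finset.mul_sum, map_sum]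
  refine Finset.sum_congr rfl fun j _ => ?_
  rw [Matrix.diag_apply, LinearMap.toMatrix_apply, LinearMap.mulLeft_apply,
    e.repr_apply_eq_of_dual_s14 hd, mul_assoc]

end Frobenius

theorem LinearMap.trace_mulLeft_one_tmul {R K A : Type*} [CommRing R] [CommRing K] [Ring A]
    [Algebra R K] [Algebra R A] [Module.Free R A] [Module.Finite R A] (y : A) :
    LinearMap.trace K (K ⊗[R] A) (LinearMap.mulLeft K ((1 : K) ⊗ₜ[R] y))
      = algebraMap R K (LinearMap.trace R A (LinearMap.mulLeft R y)) := by
  have h : LinearMap.mulLeft K ((1 : K) ⊗ₜ[R] y) = (LinearMap.mulLeft R y).baseChange K := by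
    ext x
    simp [Algebra.TensorProduct.tmul_mul_tmul]
  rw [h, LinearMap.trace_baseChange]

/-- If the characteristic element `ω = Σ e_i * e_i^#` of a Frobenius
extension `(A, f)` of `R` is annihilated by some `a ∈ A` whose image
`θ̃ a = 1 ⊗ a` in `B = K ⊗[R] A` is nonzero, then `B` is not semisimple. -/
theorem stmt14 (R K A : Type*) [CommRing R] [Field K] [CharZero K] [CommRing A]
    [Algebra R K] [Algebra R A]
    (hsurj : Function.Surjective (algebraMap R K))
    {ι : Type*} [Fintype ι] [DecidableEq ι]
    (e : Module.Basis ι R A) (d : ι → A) (f : A →ₗ[R] R)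
    (hd : ∀ i j, f (e i * d j) = if i = j then 1 else 0)
    (a : A) (ha : (∑ i, e i * d i) * a = 0)
    (ha' : ((1 : K) ⊗ₜ[R] a : K ⊗[R] A) ≠ 0) :
    ¬ IsSemisimpleRing (K ⊗[R] A) := by
  intro hss
  have : Module.Free R A := .of_basis e
  have : Module.Finite R A := .of_basis e
  refine ha' (IsSemisimpleRing.eq_zero_of_forall_trace_mulLeft_mul_eq_zero (K := K) fun b => ?_)
  obtain ⟨x, rfl⟩ := Algebra.TensorProduct.includeRight_surjective A hsurj b
  rw [Algebra.TensorProduct.includeRight_apply, Algebra.TensorProduct.tmul_mul_tmul, one_mul,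
    LinearMap.trace_mulLeft_one_tmul, LinearMap.trace_mulLeft_eq_of_dual hd, mul_assoc,
    mul_comm a, ha, mul_zero, map_zero, map_zero]
end
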